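/- Let M be an SCM over V with induced ADMG G, and C a partition of V with acyclic quotient G_C; assume do-calculus holds in G. Then Rule 3 holds at the cluster level: for disjoint cluster sets X, Y, Z, W, if Y is d-separated from Z given X ∪ W in the C-DAG obtained from G_C by removing all edges into X and all edges into Z(W) — where Z(W) is the set of Z-clusters that are not ancestors of any W-cluster in G_C after removing edges into X — then P(y | do(x), do(z), w) = P(y | do(x), w). -/

import Mathlib

/-- An acyclic directed mixed graph skeleton: a directed edge relation
together with a symmetric bidirected edge relation. -/
structure MixedGraph (V : Type) where
  dir : V → V → Prop
  bi : V → V → Prop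
  bi_symm : ∀ a b, bi a b → bi b a

namespace MixedGraph

variable {V : Type} {I : Type}

/-- Adjacency: a directed edge in either orientation or a bidirected edge. -/
def Adj (G : MixedGraph V) (a b : V) : Prop :=
  G.dir a b ∨ G.dir b a ∨ G.bi a b

/-- Acyclicity of the directed part. -/
def Acyclic (G : MixedGraph V) : Prop :=
  ∀ a, ¬ Relation.TransGen G.dir a a

/-- The quotient (cluster) graph of `G` by the partition given by the fibers of `π`. -/
def quot (G : MixedGraph V) (π : V → I) : MixedGraph I where
  dir i j := i ≠ j ∧ ∃ a b, π a = i ∧ π b = j ∧ G.dir a b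
  bi i j := i ≠ j ∧ ∃ a b, π a = i ∧ π b = j ∧ G.bi a b
  bi_symm := by
    rintro i j ⟨hne, a, b, ha, hb, h⟩
    exact ⟨hne.symm, b, a, hb, ha, G.bi_symm a b h⟩

/-- The mutilated graph: delete all edges with an arrowhead into `X`
and all directed edges out of `Z`. -/
def mutil (G : MixedGraph V) (X Z : Set V) : MixedGraph V where
  dir a b := G.dir a b ∧ b ∉ X ∧ a ∉ Z
  bi a b := G.bi a b ∧ a ∉ X ∧ b ∉ X
  bi_symm := by
    rintro a b ⟨h, ha, hb⟩
    exact ⟨G.bi_symm a b h, hb, ha⟩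

/-- Type of an edge as traversed along a walk. -/
inductive EType : Type
  | fwd   -- a → b
  | bwd   -- a ← b
  | bidir -- a ↔ b
deriving DecidableEq

/-- The step relation of a walk. -/
def step (G : MixedGraph V) (a : V) (e : EType) (b : V) : Prop :=
  match e with
  | .fwd => G.dir a b
  | .bwd => G.dir b a
  | .bidir => G.bi a b

/-- A walk starting at a vertex, given by a list of (edge type, next vertex). -/
def IsWalk (G : MixedGraph V) : V → List (EType × V) → Prop
  | _, [] => True
  | a, (e, b) :: rest => G.step a e b ∧ IsWalk G b rest

/-- The final vertex of a walk. -/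
def walkEnd : V → List (EType × V) → V
  | a, [] => a
  | _, (_, b) :: rest => walkEnd b rest

/-- `b` is a descendant of `a` (along directed edges, reflexively). -/
def Desc (G : MixedGraph V) : V → V → Prop :=
  Relation.ReflTransGen G.dir

/-- Whether an interior vertex between two consecutive steps is a collider:
an arrowhead on both sides. -/
def colliderAt (e₁ e₂ : EType) : Prop :=
  (e₁ = EType.fwd ∨ e₁ = EType.bidir) ∧ (e₂ = EType.bwd ∨ e₂ = EType.bidir)

/-- A walk is active (d-connecting) given a conditioning set `S`:
every interior non-collider lies outside `S` and every interior collider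
is in `S` or has a descendant in `S`. -/
def Active (G : MixedGraph V) (S : Set V) : List (EType × V) → Prop
  | [] => True
  | [_] => True
  | (e₁, b) :: (e₂, c) :: rest =>
      ((colliderAt e₁ e₂ ∧ ∃ d ∈ S, G.Desc b d) ∨ (¬ colliderAt e₁ e₂ ∧ b ∉ S))
      ∧ Active G S ((e₂, c) :: rest)

/-- The walk contains an (interior) collider belonging to `T`. -/
def HasColliderIn (G : MixedGraph V) (T : Set V) : List (EType × V) → Prop
  | (e₁, b) :: (e₂, c) :: rest =>
      (colliderAt e₁ e₂ ∧ b ∈ T) ∨ HasColliderIn G T ((e₂, c) :: rest)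
  | _ => False

/-- `X` and `Y` are d-connected given `S`: some active walk joins them. -/
def DConn (G : MixedGraph V) (S X Y : Set V) : Prop :=
  ∃ x ∈ X, ∃ w : List (EType × V),
    w ≠ [] ∧ G.IsWalk x w ∧ walkEnd x w ∈ Y ∧ G.Active S w

/-- d-separation: no active walk between `X` and `Y` given `S`. -/
def DSep (G : MixedGraph V) (S X Y : Set V) : Prop :=
  ¬ G.DConn S X Y

end MixedGraph

open scoped Classical

/-- The marginal of a (sub)distribution `Pd` on the event that the coordinates
in `S` agree with `v`. -/
noncomputable def marg {V : Type} [Fintype V] {val : V → Type}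
    [∀ i, Fintype (val i)]
    (Pd : (∀ i, val i) → ℝ) (S : Set V) (v : ∀ i, val i) : ℝ :=
  ∑ w : ∀ i, val i, if ∀ i ∈ S, w i = v i then Pd w else 0

/-- Four pairwise disjoint sets. -/
def PairwiseDisj4 {α : Type} (A B C D : Set α) : Prop :=
  Disjoint A B ∧ Disjoint A C ∧ Disjoint A D ∧
  Disjoint B C ∧ Disjoint B D ∧ Disjoint C D

namespace MixedGraph

variable {V I : Type}

/-- Projection of a walk to the quotient: drop within-cluster steps. -/
noncomputable def proj (π : V → I) : V → List (EType × V) → List (EType × I)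
  | _, [] => []
  | a, (e, b) :: rest =>
      if π b = π a then proj π b rest else (e, π b) :: proj π b rest

section Mono

variable {H K : MixedGraph V}

lemma step_mono (hdir : ∀ a b, H.dir a b → K.dir a b)
    (hbi : ∀ a b, H.bi a b → K.bi a b)
    {a b : V} {e : EType} (h : H.step a e b) : K.step a e b := by
  cases e
  · exact hdir _ _ h
  · exact hdir _ _ h
  · exact hbi _ _ h

lemma desc_mono (hdir : ∀ a b, H.dir a b → K.dir a b)
    {a b : V} (h : H.Desc a b) : K.Desc a b :=
  Relation.ReflTransGen.mono (fun a b => hdir a b) _ _ h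

lemma isWalk_mono (hdir : ∀ a b, H.dir a b → K.dir a b)
    (hbi : ∀ a b, H.bi a b → K.bi a b) : ∀ (w : List (EType × V)) (a : V), H.IsWalk a w → K.IsWalk a w
  | [], _, _ => trivial
  | (e, b) :: rest, a, ⟨h1, h2⟩ =>
      ⟨step_mono hdir hbi h1, isWalk_mono hdir hbi rest b h2⟩

lemma active_mono (hdir : ∀ a b, H.dir a b → K.dir a b)
    (hbi : ∀ a b, H.bi a b → K.bi a b) {S : Set V} :
    ∀ (w : List (EType × V)), H.Active S w → K.Active S w
  | [], _ => trivial
  | [_], _ => trivial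
  | (e₁, b) :: (e₂, c) :: rest, h => by
      obtain ⟨h1, h2⟩ := h
      refine ⟨?_, active_mono hdir hbi ((e₂, c) :: rest) h2⟩
      rcases h1 with ⟨hc, d, hd, hdesc⟩ | ⟨hnc, hb⟩
      · exact Or.inl ⟨hc, d, hd, desc_mono hdir hdesc⟩
      · exact Or.inr ⟨hnc, hb⟩

lemma dconn_mono (hdir : ∀ a b, H.dir a b → K.dir a b)
    (hbi : ∀ a b, H.bi a b → K.bi a b) {S X Y : Set V} (h : H.DConn S X Y) : K.DConn S X Y := by
  obtain ⟨x, hx, w, hne, hw, hend, hact⟩ := h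
  exact ⟨x, hx, w, hne, isWalk_mono hdir hbi w x hw, hend,
    active_mono hdir hbi w hact⟩

end Mono

lemma active_tail {G : MixedGraph V} {S : Set V} :
    ∀ (l : List (EType × V)) (p : EType × V), G.Active S (p :: l) → G.Active S l
  | [], _, _ => trivial
  | (e₂, c) :: r, (e₁, b), h => h.2

section Proj

variable (G : MixedGraph V) (π : V → I)

lemma desc_quot {a b : V} (h : G.Desc a b) : (G.quot π).Desc (π a) (π b) := by
  induction h with
  | refl => exact Relation.ReflTransGen.refl
  | @tail b c hab hbc ih =>
      by_cases hπ : π c = π b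
      · rwa [hπ]
      · exact ih.tail ⟨fun hh => hπ hh.symm, b, c, rfl, rfl, hbc⟩

lemma walkEnd_proj : ∀ (w : List (EType × V)) (a : V),
    walkEnd (π a) (proj π a w) = π (walkEnd a w)
  | [], _ => rfl
  | (e, b) :: rest, a => by
      by_cases h : π b = π a
      · rw [proj, if_pos h, ← h]
        exact walkEnd_proj rest b
      · rw [proj, if_neg h]
        exact walkEnd_proj rest b

lemma isWalk_proj : ∀ (w : List (EType × V)) (a : V),
    G.IsWalk a w → (G.quot π).IsWalk (π a) (proj π a w)
  | [], _, _ => trivial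
  | (e, b) :: rest, a, ⟨h1, h2⟩ => by
      by_cases h : π b = π a
      · rw [proj, if_pos h, ← h]
        exact isWalk_proj rest b h2
      · rw [proj, if_neg h]
        refine ⟨?_, isWalk_proj rest b h2⟩
        cases e with
        | fwd => exact ⟨fun hh => h hh.symm, a, b, rfl, rfl, h1⟩
        | bwd => exact ⟨h, b, a, rfl, rfl, h1⟩
        | bidir => exact ⟨fun hh => h hh.symm, a, b, rfl, rfl, h1⟩

variable {S_I : Set I}

/-- Key lemma: the first surviving edge after a vertex `b`, together with the
activation condition at the cluster of `b`. -/
lemma key (S_I : Set I) : ∀ (rest : List (EType × V)) (b : V) (e : EType),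
    G.IsWalk b rest → G.Active (π ⁻¹' S_I) ((e, b) :: rest) →
    proj π b rest = [] ∨ ∃ e' c rest', proj π b rest = (e', c) :: rest' ∧
      (colliderAt e e' → ∃ d ∈ S_I, (G.quot π).Desc (π b) d) ∧
      (¬ colliderAt e e' → π b ∉ S_I)
  | [], _, _, _, _ => Or.inl rfl
  | (f, u) :: rest2, b, e, hw, hact => by
      obtain ⟨hstep, hw2⟩ := hw
      obtain ⟨condb, hact2⟩ := hact
      by_cases hπ : π u = π b
      · rw [proj, if_pos hπ]
        rcases key S_I rest2 u f hw2 hact2 with h0 | ⟨e', c, rest', heq, hcol, hncol⟩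
        · exact Or.inl h0
        · refine Or.inr ⟨e', c, rest', heq, ?_, ?_⟩
          · intro hee'
            rcases condb with ⟨hcef, d, hd, hdesc⟩ | ⟨hncef, hbS⟩
            · exact ⟨π d, hd, desc_quot G π hdesc⟩
            · -- e is arrowhead-in (from hee'), so f must be fwd
              have hf : f = EType.fwd := by
                cases f with
                | fwd => rfl
                | bwd => exact absurd ⟨hee'.1, Or.inl rfl⟩ hncef
                | bidir => exact absurd ⟨hee'.1, Or.inr rfl⟩ hncef
              subst hf
              obtain ⟨d, hd, hdesc⟩ := hcol ⟨Or.inl rfl, hee'.2⟩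
              exact ⟨d, hd, hπ ▸ hdesc⟩
          · intro hnee'
            rcases condb with ⟨hcef, d, hd, hdesc⟩ | ⟨hncef, hbS⟩
            · have : π u ∉ S_I := by
                apply hncol
                intro hcf
                exact hnee' ⟨hcef.1, hcf.2⟩
              rwa [hπ] at this
            · exact hbS
      · rw [proj, if_neg hπ]
        refine Or.inr ⟨f, π u, proj π u rest2, rfl, ?_, ?_⟩
        · intro hef
          rcases condb with ⟨_, d, hd, hdesc⟩ | ⟨hncef, _⟩
          · exact ⟨π d, hd, desc_quot G π hdesc⟩
          · exact absurd hef hncef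
        · intro hnef
          rcases condb with ⟨hcef, _⟩ | ⟨_, hbS⟩
          · exact absurd hcef hnef
          · exact hbS

lemma active_proj (S_I : Set I) : ∀ (w : List (EType × V)) (a : V),
    G.IsWalk a w → G.Active (π ⁻¹' S_I) w →
    (G.quot π).Active S_I (proj π a w)
  | [], _, _, _ => trivial
  | (e, b) :: rest, a, ⟨h1, h2⟩, hact => by
      by_cases h : π b = π a
      · rw [proj, if_pos h]
        exact active_proj S_I rest b h2 (active_tail rest (e, b) hact)
      · rw [proj, if_neg h]
        rcases key G π S_I rest b e h2 hact with h0 | ⟨e', c, rest', heq, hcol, hncol⟩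
        · rw [h0]; trivial
        · rw [heq]
          refine ⟨?_, ?_⟩
          · by_cases hc : colliderAt e e'
            · exact Or.inl ⟨hc, hcol hc⟩
            · exact Or.inr ⟨hc, hncol hc⟩
          · rw [← heq]
            exact active_proj S_I rest b h2 (active_tail rest (e, b) hact)

lemma dconn_proj {X_I Y_I : Set I} (hXY : Disjoint X_I Y_I)
    (h : G.DConn (π ⁻¹' S_I) (π ⁻¹' X_I) (π ⁻¹' Y_I)) :
    (G.quot π).DConn S_I X_I Y_I := by
  obtain ⟨x, hx, w, hne, hw, hend, hact⟩ := h
  have hend' : walkEnd (π x) (proj π x w) ∈ Y_I := by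
    rw [walkEnd_proj π w x]; exact hend
  refine ⟨π x, hx, proj π x w, ?_, isWalk_proj G π w x hw, hend',
    active_proj G π S_I w x hw hact⟩
  intro h0
  rw [h0] at hend'
  exact Set.disjoint_left.mp hXY hx hend'

end Proj

end MixedGraph

open MixedGraph in
/-- Rule 3 of do-calculus at the cluster level: if Rule 3 of
do-calculus holds in `G` for the family `Pdo` (in cross-multiplied form),
then Rule 3 holds at the cluster level: a d-separation `(Y ⊥ Z | X ∪ W)` in
the C-DAG with edges into `X` and into `Z(W)` removed — `Z(W)` being the
`Z`-clusters that are not ancestors of any `W`-cluster after removing edges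
into `X` — yields `P(y | do(x), do(z), w) = P(y | do(x), w)`. -/
theorem stmt14 {V I : Type} [Fintype V] [Fintype I]
    {val : V → Type} [∀ i, Fintype (val i)]
    (G : MixedGraph V) (hG : G.Acyclic)
    (π : V → I) (hsurj : Function.Surjective π) (hq : (G.quot π).Acyclic)
    (Pdo : Set V → (∀ i, val i) → ℝ)
    -- Rule 3 of do-calculus holds in G:
    (hrule3 : ∀ Xv Yv Zv Wv : Set V, PairwiseDisj4 Xv Yv Zv Wv →
      (G.mutil (Xv ∪ {z ∈ Zv | ∀ d ∈ Wv,
          ¬ Relation.TransGen (G.mutil Xv ∅).dir z d}) ∅).DSep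
        (Xv ∪ Wv) Yv Zv →
      ∀ v : ∀ i, val i,
        marg (Pdo (Xv ∪ Zv)) (Xv ∪ Zv ∪ Yv ∪ Wv) v *
          marg (Pdo Xv) (Xv ∪ Wv) v =
        marg (Pdo Xv) (Xv ∪ Yv ∪ Wv) v *
          marg (Pdo (Xv ∪ Zv)) (Xv ∪ Zv ∪ Wv) v) :
    -- Rule 3 holds at the cluster level:
    ∀ X Y Z W : Set I, PairwiseDisj4 X Y Z W →
      (((G.quot π)).mutil (X ∪ {c ∈ Z | ∀ d ∈ W,
          ¬ Relation.TransGen ((G.quot π).mutil X ∅).dir c d}) ∅).DSep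
        (X ∪ W) Y Z →
      ∀ v : ∀ i, val i,
        marg (Pdo {i | π i ∈ X ∪ Z}) {i | π i ∈ X ∪ Z ∪ Y ∪ W} v *
          marg (Pdo {i | π i ∈ X}) {i | π i ∈ X ∪ W} v =
        marg (Pdo {i | π i ∈ X}) {i | π i ∈ X ∪ Y ∪ W} v *
          marg (Pdo {i | π i ∈ X ∪ Z}) {i | π i ∈ X ∪ Z ∪ W} v := by
  intro X Y Z W hdisj hdsep v
  obtain ⟨hXY, hXZ, hXW, hYZ, hYW, hZW⟩ := hdisj
  -- the vertex-level mutilation set contains the preimage of the cluster-level one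
  set Zw_v : Set V := {z ∈ π ⁻¹' Z | ∀ d ∈ π ⁻¹' W,
      ¬ Relation.TransGen (G.mutil (π ⁻¹' X) ∅).dir z d} with hZwv
  set Zw_I : Set I := {c ∈ Z | ∀ d ∈ W,
      ¬ Relation.TransGen ((G.quot π).mutil X ∅).dir c d} with hZwI
  have hMsub : ∀ b : V, π b ∈ X ∪ Zw_I → b ∈ π ⁻¹' X ∪ Zw_v := by
    intro b hb
    rcases hb with hb | ⟨hbZ, hanc⟩
    · exact Or.inl hb
    · refine Or.inr ⟨hbZ, ?_⟩
      intro d hdW htg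
      apply hanc (π d) hdW
      -- project the directed path to the quotient
      have hdesc : ((G.mutil (π ⁻¹' X) ∅).quot π).Desc (π b) (π d) :=
        desc_quot (G.mutil (π ⁻¹' X) ∅) π htg.to_reflTransGen
      have hdesc' : Relation.ReflTransGen ((G.quot π).mutil X ∅).dir (π b) (π d) := by
        refine Relation.ReflTransGen.mono ?_ _ _ hdesc
        rintro i j ⟨hne, a', b', rfl, rfl, hd', hb'X, -⟩
        exact ⟨⟨hne, a', b', rfl, rfl, hd'⟩, hb'X, not_false⟩
      have hne : π b ≠ π d := by
        intro hh
        exact Set.disjoint_left.mp hZW hbZ (hh ▸ hdW)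
      rcases hdesc'.cases_head with hh | ⟨c, hc, hrest⟩
      · exact (hne hh).elim
      · exact Relation.TransGen.head' hc hrest
  -- apply the vertex-level rule 3
  have hpre1 : {i : V | π i ∈ X ∪ Z} = π ⁻¹' X ∪ π ⁻¹' Z := by
    rw [← Set.preimage_union]; rfl
  have hpre2 : {i : V | π i ∈ X ∪ Z ∪ Y ∪ W}
      = π ⁻¹' X ∪ π ⁻¹' Z ∪ π ⁻¹' Y ∪ π ⁻¹' W := by
    rw [← Set.preimage_union, ← Set.preimage_union, ← Set.preimage_union]; rfl
  have hpre3 : {i : V | π i ∈ X ∪ W} = π ⁻¹' X ∪ π ⁻¹' W := by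
    rw [← Set.preimage_union]; rfl
  have hpre4 : {i : V | π i ∈ X ∪ Y ∪ W} = π ⁻¹' X ∪ π ⁻¹' Y ∪ π ⁻¹' W := by
    rw [← Set.preimage_union, ← Set.preimage_union]; rfl
  have hpre5 : {i : V | π i ∈ X ∪ Z ∪ W} = π ⁻¹' X ∪ π ⁻¹' Z ∪ π ⁻¹' W := by
    rw [← Set.preimage_union, ← Set.preimage_union]; rfl
  have hpre0 : {i : V | π i ∈ X} = π ⁻¹' X := rfl
  rw [hpre1, hpre2, hpre3, hpre4, hpre5, hpre0]
  apply hrule3 (π ⁻¹' X) (π ⁻¹' Y) (π ⁻¹' Z) (π ⁻¹' W)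
  · exact ⟨hXY.preimage π, hXZ.preimage π, hXW.preimage π,
      hYZ.preimage π, hYW.preimage π, hZW.preimage π⟩
  · -- d-separation at the vertex level from the cluster-level d-separation
    intro hconn
    apply hdsep
    -- the vertex-level mutilated graph
    set H : MixedGraph V := G.mutil (π ⁻¹' X ∪ Zw_v) ∅ with hH
    set K : MixedGraph I := (G.quot π).mutil (X ∪ Zw_I) ∅ with hK
    have hconn' : H.DConn (π ⁻¹' (X ∪ W)) (π ⁻¹' Y) (π ⁻¹' Z) := by
      rwa [Set.preimage_union]
    have hq' : (H.quot π).DConn (X ∪ W) Y Z :=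
      dconn_proj H π hYZ hconn'
    refine dconn_mono ?_ ?_ hq'
    · rintro i j ⟨hne, a', b', rfl, rfl, hd', hb'M, -⟩
      refine ⟨⟨hne, a', b', rfl, rfl, hd'⟩, ?_, not_false⟩
      intro hmem
      exact hb'M (hMsub b' hmem)
    · rintro i j ⟨hne, a', b', rfl, rfl, hb', ha'M, hb'M⟩
      refine ⟨⟨hne, a', b', rfl, rfl, hb'⟩, ?_, ?_⟩
      · intro hmem; exact ha'M (hMsub a' hmem)
      · intro hmem; exact hb'M (hMsub b' hmem)
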